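/- (Negabicomplex Pell numbers) For every natural number n, BP(−n) = (−1)^{n+1}·BP(n) + (−1)^n·Q(n)·(i + 2·j + 5·ij). -/
import Mathlib

open scoped TensorProduct

noncomputable def bi : ℂ ⊗[ℝ] ℂ := Complex.I ⊗ₜ[ℝ] 1
noncomputable def bj : ℂ ⊗[ℝ] ℂ := (1 : ℂ) ⊗ₜ[ℝ] Complex.I
noncomputable def bij : ℂ ⊗[ℝ] ℂ := Complex.I ⊗ₜ[ℝ] Complex.I

/-- The bicomplex Pell number `BP n = P n + P (n+1) i + P (n+2) j + P (n+3) ij`. -/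
noncomputable def BP (P : ℤ → ℤ) (n : ℤ) : ℂ ⊗[ℝ] ℂ :=
  (P n : ℝ) • (1 : ℂ ⊗[ℝ] ℂ) + (P (n + 1) : ℝ) • bi + (P (n + 2) : ℝ) • bj +
    (P (n + 3) : ℝ) • bij

lemma seqUniq (f g : ℕ → ℤ) (hf : ∀ n, f (n+2) = f n - 2 * f (n+1))
    (hg : ∀ n, g (n+2) = g n - 2 * g (n+1)) (h0 : f 0 = g 0) (h1 : f 1 = g 1) :
    ∀ n, f n = g n := by
  intro n
  induction n using Nat.twoStepInduction with
  | zero => exact h0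
  | one => exact h1
  | more n ih1 ih2 => rw [hf, hg, ih1, ih2]

lemma keyLem (P Q : ℤ → ℤ)
    (hP : ∀ n : ℤ, P (n + 2) = 2 * P (n + 1) + P n)
    (hQ : ∀ n : ℤ, Q (n + 2) = 2 * Q (n + 1) + Q n)
    (k b : ℤ)
    (h0 : P k = (-1)^(0+1) * P k + b * Q 0)
    (h1 : P (-1 + k) = (-1)^(1+1) * P (1 + k) + (-1) * (b * Q 1)) :
    ∀ n : ℕ, P (-(n:ℤ) + k) = (-1)^(n+1) * P ((n:ℤ) + k) + (-1)^n * (b * Q n) := by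
  apply seqUniq
  · intro n
    have h := hP (-((n:ℤ)+2) + k)
    push_cast at h ⊢
    ring_nf at h ⊢
    linarith
  · intro n
    have h1 := hP ((n:ℤ) + k)
    have h2 := hQ (n:ℤ)
    push_cast
    rw [show ((n:ℤ)+2+k) = (n:ℤ)+k+2 by ring, h1, h2]
    ring
  · simpa using h0
  · simpa using h1

theorem negaBicomplexPell (P Q : ℤ → ℤ)
    (hP : ∀ n : ℤ, P (n + 2) = 2 * P (n + 1) + P n) (hP0 : P 0 = 0) (hP1 : P 1 = 1)
    (hQ : ∀ n : ℤ, Q (n + 2) = 2 * Q (n + 1) + Q n) (hQ0 : Q 0 = 2) (hQ1 : Q 1 = 2)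
    (n : ℕ) :
    BP P (-(n : ℤ)) =
      ((-1 : ℝ) ^ (n + 1)) • BP P (n : ℤ) +
        ((-1 : ℝ) ^ n * (Q (n : ℤ) : ℝ)) • (bi + (2 : ℝ) • bj + (5 : ℝ) • bij) := by
  have hPm1 : P (-1) = 1 := by have := hP (-1); simp at this; omega
  have hP2 : P 2 = 2 := by have := hP 0; norm_num at this; omega
  have hP3 : P 3 = 5 := by have := hP 1; norm_num at this; omega
  have hP4 : P 4 = 12 := by have := hP 2; norm_num at this; omega
  have E1 : P (-(n:ℤ)) = (-1)^(n+1) * P (n:ℤ) := by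
    have := keyLem P Q hP hQ 0 0 (by simp [hP0]) (by simp [hPm1, hP1]) n
    simpa using this
  have E2 := keyLem P Q hP hQ 1 1 (by norm_num [hP1, hQ0]) (by norm_num [hP0, hP2, hQ1]) n
  have E3 := keyLem P Q hP hQ 2 2 (by norm_num [hP2, hQ0]) (by norm_num [hP1, hP3, hQ1]) n
  have E4 := keyLem P Q hP hQ 3 5 (by norm_num [hP3, hQ0]) (by norm_num [hP2, hP4, hQ1]) n
  simp only [BP]
  rw [E1, E2, E3, E4]
  push_cast
  module
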